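/- Let H be a real Hilbert space, V_h ⊆ H a closed subspace, a : H × H → ℝ bilinear with a(v,v) ≥ ‖v‖² for all v, and D : H → H monotone and Lipschitz with constant L on the relevant set. Let y ∈ H and y_h, ỹ_h ∈ V_h satisfy: a(y, v) + ⟨D(y), v⟩ = ℓ(v) and a(y_h, v) + ⟨D(y_h), v⟩ = ℓ(v) for all v ∈ V_h, and a(y - ỹ_h, v) = 0 for all v ∈ V_h (Ritz projection). Then ‖ỹ_h - y_h‖ ≤ L · ‖y - ỹ_h‖. -/

import Mathlib

open InnerProductSpace

/-! Testing the error equations with `e = ỹ_h - y_h ∈ V_h`, Galerkin orthogonality of the Ritz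
projection gives `a(e, e) = ⟪D y_h - D y, e⟫`. Splitting `D y_h - D y = (D y_h - D ỹ_h) + (D ỹ_h - D y)`,
the first part pairs nonpositively with `e` by monotonicity, and the second is bounded by
`L ‖y - ỹ_h‖ ‖e‖`; coercivity turns this into `‖e‖² ≤ L ‖y - ỹ_h‖ ‖e‖`. -/

section

variable {H : Type*} [NormedAddCommGroup H] [InnerProductSpace ℝ H]

lemma le_of_sq_le_mul {x c : ℝ} (hx : 0 ≤ x) (hc : 0 ≤ c) (h : x ^ 2 ≤ c * x) : x ≤ c := by
  rcases hx.eq_or_lt with rfl | hpos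
  · exact hc
  · exact le_of_mul_le_mul_right (by rwa [← sq]) hpos

lemma apply_sub_eq_inner_sub_of_eq {a : H →ₗ[ℝ] H →ₗ[ℝ] ℝ} {D : H → H} {lin : H → ℝ}
    {u w v : H} (hu : a u v + ⟪D u, v⟫_ℝ = lin v) (hw : a w v + ⟪D w, v⟫_ℝ = lin v) :
    a (u - w) v = ⟪D w - D u, v⟫_ℝ := by
  rw [map_sub, LinearMap.sub_apply, inner_sub_left]
  linarith

lemma inner_sub_le_of_monotone_of_lipschitz {D : H → H} {L : ℝ}
    (hmono : ∀ u v : H, 0 ≤ ⟪D u - D v, u - v⟫_ℝ)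
    (hlip : ∀ u v : H, ‖D u - D v‖ ≤ L * ‖u - v‖) (u w z : H) :
    ⟪D w - D z, u - w⟫_ℝ ≤ L * ‖u - z‖ * ‖u - w‖ := by
  have hsplit : ⟪D w - D z, u - w⟫_ℝ = ⟪D u - D z, u - w⟫_ℝ - ⟪D u - D w, u - w⟫_ℝ := by
    rw [← inner_sub_left, sub_sub_sub_cancel_left]
  calc ⟪D w - D z, u - w⟫_ℝ ≤ ⟪D u - D z, u - w⟫_ℝ := by linarith [hsplit, hmono u w]
    _ ≤ ‖D u - D z‖ * ‖u - w‖ := real_inner_le_norm _ _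
    _ ≤ L * ‖u - z‖ * ‖u - w‖ := by gcongr; exact hlip u z

lemma norm_sub_le_of_coercive_of_monotone {a : H →ₗ[ℝ] H →ₗ[ℝ] ℝ} {D : H → H} {L : ℝ}
    (hcoer : ∀ v : H, ‖v‖ ^ 2 ≤ a v v)
    (hmono : ∀ u v : H, 0 ≤ ⟪D u - D v, u - v⟫_ℝ)
    (hlip : ∀ u v : H, ‖D u - D v‖ ≤ L * ‖u - v‖) {u w z : H}
    (h : a (u - w) (u - w) = ⟪D w - D z, u - w⟫_ℝ) :
    ‖u - w‖ ≤ L * ‖u - z‖ := by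
  refine le_of_sq_le_mul (norm_nonneg _) ((norm_nonneg _).trans (hlip u z)) ?_
  calc ‖u - w‖ ^ 2 ≤ a (u - w) (u - w) := hcoer _
    _ = ⟪D w - D z, u - w⟫_ℝ := h
    _ ≤ L * ‖u - z‖ * ‖u - w‖ := inner_sub_le_of_monotone_of_lipschitz hmono hlip u w z

end

theorem supercloseness_general {H : Type*} [NormedAddCommGroup H] [InnerProductSpace ℝ H]
    (Vh : Submodule ℝ H)
    (a : H →ₗ[ℝ] H →ₗ[ℝ] ℝ)
    (hcoer : ∀ v : H, ‖v‖ ^ 2 ≤ a v v)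
    (D : H → H) (L : ℝ)
    (hmono : ∀ u v : H, 0 ≤ ⟪D u - D v, u - v⟫_ℝ)
    (hlip : ∀ u v : H, ‖D u - D v‖ ≤ L * ‖u - v‖)
    (lin : H → ℝ)
    (y yh yt : H) (hyh : yh ∈ Vh) (hyt : yt ∈ Vh)
    (hy : ∀ v ∈ Vh, a y v + ⟪D y, v⟫_ℝ = lin v)
    (hyh_eq : ∀ v ∈ Vh, a yh v + ⟪D yh, v⟫_ℝ = lin v)
    (hRitz : ∀ v ∈ Vh, a (y - yt) v = 0) :
    ‖yt - yh‖ ≤ L * ‖y - yt‖ := by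
  have he : yt - yh ∈ Vh := Vh.sub_mem hyt hyh
  have herror : a (yt - yh) (yt - yh) = ⟪D yh - D y, yt - yh⟫_ℝ := by
    calc a (yt - yh) (yt - yh) = a (y - yh) (yt - yh) - a (y - yt) (yt - yh) := by
          rw [← LinearMap.sub_apply, ← map_sub, sub_sub_sub_cancel_left]
      _ = ⟪D yh - D y, yt - yh⟫_ℝ := by
          rw [hRitz _ he, sub_zero, apply_sub_eq_inner_sub_of_eq (hy _ he) (hyh_eq _ he)]
  rw [norm_sub_rev y]
  exact norm_sub_le_of_coercive_of_monotone hcoer hmono hlip herror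

/-- Abstract supercloseness lemma: the finite element solution of the semilinear
problem is superclose to the Ritz projection of the continuous solution. -/
theorem supercloseness {H : Type*} [NormedAddCommGroup H] [InnerProductSpace ℝ H]
    [CompleteSpace H]
    (Vh : Submodule ℝ H) (hVh : IsClosed (Vh : Set H))
    (a : H →ₗ[ℝ] H →ₗ[ℝ] ℝ)
    (hcoer : ∀ v : H, ‖v‖ ^ 2 ≤ a v v)
    (D : H → H) (L : ℝ)
    (hmono : ∀ u v : H, 0 ≤ ⟪D u - D v, u - v⟫_ℝ)
    (hlip : ∀ u v : H, ‖D u - D v‖ ≤ L * ‖u - v‖)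
    (lin : H → ℝ)
    (y yh yt : H) (hyh : yh ∈ Vh) (hyt : yt ∈ Vh)
    (hy : ∀ v ∈ Vh, a y v + ⟪D y, v⟫_ℝ = lin v)
    (hyh_eq : ∀ v ∈ Vh, a yh v + ⟪D yh, v⟫_ℝ = lin v)
    (hRitz : ∀ v ∈ Vh, a (y - yt) v = 0) :
    ‖yt - yh‖ ≤ L * ‖y - yt‖ :=
  supercloseness_general Vh a hcoer D L hmono hlip lin y yh yt hyh hyt hy hyh_eq hRitz
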